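/- arXiv:math/0510215 — 2 statements merged into one kernel-verified Lean document; each statement's English description precedes it below -/
import Mathlib

section
/- Let G be a group with elements σ, ρ, B, and A₁, A₂, A₃, A_{2g+1} satisfying: σ² = 1, ρ central with ρ² = 1, σ A_i σ = A_i^{-1} for all i, σBσ = ρB, B A_i B^{-1} = A_{i+1} (indices mod 2g+2), and the braid relations A_i A_{i+1} A_i = A_{i+1} A_i A_{i+1}. Then for N = σ A_{2g+1}^{-1} A₁ A₂ A₁^{-1} B A_{2g+1}^{-1} one has N² = A_{2g+1} (A₂ A₃)(A₁^{-1} A₂^{-1}) B² A_{2g+1}^{-1} ρ. -/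
/-! Write `N = σ * w` with `w = A_{2g+1}⁻¹ A₁ A₂ A₁⁻¹ B A_{2g+1}⁻¹`. Since `σ` is an involution,
`N ^ 2 = (σ w σ) * w`, and conjugation by `σ` inverts every `A i` and turns `B` into `ρ * B`, so
one factor `ρ` splits off. Conjugation by `B` carries `A₁ A₂ A₁⁻¹` to `A₂ A₃ A₂⁻¹`; the braid
relation in the form `A₁⁻¹ A₂⁻¹ A₁ A₂ = A₂ A₁⁻¹` and the commutation of `A₁` with `A₃` then give
the claimed word. -/

theorem ZMod.natCast_ne_natCast_of_lt {n a b : ℕ} (ha : a < n) (hb : b < n) (hab : a ≠ b) :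
    (a : ZMod n) ≠ b := by
  rwa [Ne, ZMod.natCast_eq_natCast_iff', Nat.mod_eq_of_lt ha, Nat.mod_eq_of_lt hb]

theorem commute_one_three_of_far_commute {G : Type*} [Group G] {n : ℕ} (hn : 4 < n)
    (A : ZMod n → G)
    (hcomm : ∀ i j : ZMod n, i ≠ j → i ≠ j + 1 → j ≠ i + 1 → A i * A j = A j * A i) :
    Commute (A 1) (A 3) := by
  have hne (a b : ℕ) (ha : a < 5) (hb : b < 5) (hab : a ≠ b) : (a : ZMod n) ≠ b :=
    ZMod.natCast_ne_natCast_of_lt (ha.trans_le hn) (hb.trans_le hn) hab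
  refine hcomm 1 3 ?_ ?_ ?_
  · exact_mod_cast hne 1 3 (by norm_num) (by norm_num) (by norm_num)
  · norm_num; exact_mod_cast hne 1 4 (by norm_num) (by norm_num) (by norm_num)
  · norm_num; exact_mod_cast hne 3 2 (by norm_num) (by norm_num) (by norm_num)

theorem inv_mul_inv_mul_mul_of_braid {G : Type*} [Group G] {a b : G}
    (h : a * b * a = b * a * b) : a⁻¹ * b⁻¹ * a * b = b * a⁻¹ := by
  have hab : a * b = b * a * b * a⁻¹ := by rw [← h]; group
  rw [mul_assoc _ a b, hab]; group

theorem sq_mul_eq_conj_mul {G : Type*} [Group G] {σ : G} (hσ : σ ^ 2 = 1) (w : G) :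
    (σ * w) ^ 2 = MulAut.conj σ w * w := by
  rw [MulAut.conj_apply, inv_eq_of_mul_eq_one_left (by rwa [← pow_two]), pow_two]
  group

theorem stmt_13_general {G : Type*} [Group G] (g : ℕ) (hg : 2 ≤ g)
    (σ ρ B : G) (A : ZMod (2 * g + 2) → G)
    (hσ : σ ^ 2 = 1) (hρc : ρ ∈ Subgroup.center G)
    (hσA : ∀ i, σ * A i * σ = (A i)⁻¹)
    (hσB : σ * B * σ = ρ * B)
    (hconj : ∀ i, B * A i * B⁻¹ = A (i + 1))
    (hcomm : ∀ i j : ZMod (2 * g + 2), i ≠ j → i ≠ j + 1 → j ≠ i + 1 → A i * A j = A j * A i)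
    (hbraid : ∀ i, A i * A (i + 1) * A i = A (i + 1) * A i * A (i + 1))
    (N : G)
    (hN : N = σ * (A (2 * g + 1))⁻¹ * A 1 * A 2 * (A 1)⁻¹ * B * (A (2 * g + 1))⁻¹) :
    N ^ 2 = A (2 * g + 1) * (A 2 * A 3) * ((A 1)⁻¹ * (A 2)⁻¹) * B ^ 2 * (A (2 * g + 1))⁻¹ * ρ := by
  have hσinv : σ⁻¹ = σ := inv_eq_of_mul_eq_one_left (by rwa [← pow_two])
  have hσA' (i) : MulAut.conj σ (A i) = (A i)⁻¹ := by rw [MulAut.conj_apply, hσinv, hσA]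
  have hσB' : MulAut.conj σ B = ρ * B := by rw [MulAut.conj_apply, hσinv, hσB]
  have hBA : MulAut.conj B (A 1 * A 2 * (A 1)⁻¹) = A 2 * A 3 * (A 2)⁻¹ := by
    simp only [map_mul, map_inv, MulAut.conj_apply, hconj, one_add_one_eq_two,
      two_add_one_eq_three]
  have hbr : (A 1)⁻¹ * (A 2)⁻¹ * A 1 * A 2 = A 2 * (A 1)⁻¹ := by
    have h := hbraid 1
    rw [one_add_one_eq_two] at h
    exact inv_mul_inv_mul_mul_of_braid h
  have h13 : Commute (A 1) (A 3) := commute_one_three_of_far_commute (by omega) A hcomm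
  have hρ (x y : G) : x * (ρ * y) = ρ * (x * y) := by
    rw [← mul_assoc, Subgroup.mem_center_iff.mp hρc, mul_assoc]
  calc N ^ 2 = MulAut.conj σ ((A (2 * g + 1))⁻¹ * A 1 * A 2 * (A 1)⁻¹ * B * (A (2 * g + 1))⁻¹) *
        ((A (2 * g + 1))⁻¹ * A 1 * A 2 * (A 1)⁻¹ * B * (A (2 * g + 1))⁻¹) := by
        rw [hN, ← sq_mul_eq_conj_mul hσ]; simp only [mul_assoc]
    _ = ρ * (A (2 * g + 1) * ((A 1)⁻¹ * (A 2)⁻¹ * A 1) * MulAut.conj B (A 1 * A 2 * (A 1)⁻¹) *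
        B ^ 2 * (A (2 * g + 1))⁻¹) := by
        simp only [map_mul, map_inv, hσA', hσB', inv_inv]
        simp only [MulAut.conj_apply, mul_assoc, hρ]
        group
    _ = ρ * (A (2 * g + 1) * ((A 1)⁻¹ * (A 2)⁻¹ * A 1 * A 2 * A 3) * (A 2)⁻¹ * B ^ 2 *
        (A (2 * g + 1))⁻¹) := by
        rw [hBA]; group
    _ = ρ * (A (2 * g + 1) * (A 2 * A 3 * ((A 1)⁻¹ * (A 2)⁻¹)) * B ^ 2 * (A (2 * g + 1))⁻¹) := by
        rw [hbr, mul_assoc (A 2), h13.inv_left.eq]; group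
    _ = _ := by rw [← Subgroup.mem_center_iff.mp hρc]; group

theorem stmt_13 {G : Type*} [Group G] (g : ℕ) (hg : 2 ≤ g)
    (σ ρ B : G) (A : ZMod (2 * g + 2) → G)
    (hσ : σ ^ 2 = 1) (hρc : ρ ∈ Subgroup.center G) (hρ2 : ρ ^ 2 = 1)
    (hσA : ∀ i, σ * A i * σ = (A i)⁻¹)
    (hσB : σ * B * σ = ρ * B)
    (hconj : ∀ i, B * A i * B⁻¹ = A (i + 1))
    (hcomm : ∀ i j : ZMod (2 * g + 2), i ≠ j → i ≠ j + 1 → j ≠ i + 1 → A i * A j = A j * A i)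
    (hbraid : ∀ i, A i * A (i + 1) * A i = A (i + 1) * A i * A (i + 1))
    (N : G)
    (hN : N = σ * (A (2 * g + 1))⁻¹ * A 1 * A 2 * (A 1)⁻¹ * B * (A (2 * g + 1))⁻¹) :
    N ^ 2 = A (2 * g + 1) * (A 2 * A 3) * ((A 1)⁻¹ * (A 2)⁻¹) * B ^ 2 * (A (2 * g + 1))⁻¹ * ρ :=
  stmt_13_general g hg σ ρ B A hσ hρc hσA hσB hconj hcomm hbraid N hN
end

section
/- Let G be a group with generators A₁, …, A_{2g+2}, B, ρ subject to the relations: ρ = A₁⋯A_{2g+1}A_{2g+1}⋯A₁, B = A₁⋯A_{2g+1}, B A_i B^{-1} = A_{i+1 mod 2g+2}, far commutation and braid relations among the A_i, B^{2g+2} = 1, ρ² = 1, and ρ central. Then in the abelianization of G, the image of each A_i generates, and the abelianization is cyclic of order 4g+2 if g is even and 8g+4 if g is odd. -/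
/-- Generators: `Sum.inl i` is `A_i` (0-indexed, so `Sum.inl i` means `A_{i+1}`),
`Sum.inr (Sum.inl ())` is `B`, `Sum.inr (Sum.inr ())` is `ρ`. -/
abbrev hypGen (g : ℕ) := Fin (2 * g + 2) ⊕ Unit ⊕ Unit

def hypA (g : ℕ) (i : Fin (2 * g + 2)) : FreeGroup (hypGen g) := FreeGroup.of (Sum.inl i)

def hypB (g : ℕ) : FreeGroup (hypGen g) := FreeGroup.of (Sum.inr (Sum.inl ()))

def hypRho (g : ℕ) : FreeGroup (hypGen g) := FreeGroup.of (Sum.inr (Sum.inr ()))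

/-- The word `A₁ A₂ ⋯ A_{2g+1}` (0-indexed product of the first `2g+1` generators). -/
def hypProd (g : ℕ) : FreeGroup (hypGen g) :=
  ((List.ofFn fun i : Fin (2 * g + 1) => hypA g i.castSucc)).prod

/-- Defining relations of the hyperelliptic mapping class group presentation. -/
def hypRels (g : ℕ) : Set (FreeGroup (hypGen g)) :=
  {(hypRho g)⁻¹ * hypProd g * (List.ofFn fun i : Fin (2 * g + 1) => hypA g i.castSucc).reverse.prod} ∪
  {(hypB g)⁻¹ * hypProd g} ∪
  (Set.range fun i : Fin (2 * g + 2) =>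
    hypB g * hypA g i * (hypB g)⁻¹ * (hypA g (i + 1))⁻¹) ∪
  {w | ∃ i j : Fin (2 * g + 2), i ≠ j ∧ i ≠ j + 1 ∧ j ≠ i + 1 ∧
    w = hypA g i * hypA g j * (hypA g i)⁻¹ * (hypA g j)⁻¹} ∪
  (Set.range fun i : Fin (2 * g + 2) =>
    hypA g i * hypA g (i + 1) * hypA g i *
      ((hypA g (i + 1)) * hypA g i * hypA g (i + 1))⁻¹) ∪
  {(hypB g) ^ (2 * g + 2)} ∪
  {(hypRho g) ^ 2} ∪
  (Set.range fun i : Fin (2 * g + 2) =>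
    hypRho g * hypA g i * (hypRho g)⁻¹ * (hypA g i)⁻¹)

/-! In the abelianization, conjugation by `B` identifies all `A_i` with one class `a`, and the
first two relations give `B = a ^ (2g+1)`, `ρ = a ^ (4g+2)`; so `a` generates, and `B ^ (2g+2) = 1`,
`ρ ^ 2 = 1` kill `a ^ gcd((2g+1)(2g+2), 8g+4)`, a gcd equal to `4g+2` or `8g+4` according to the
parity of `g`. Sending `A_i ↦ 1`, `B ↦ 2g+1`, `ρ ↦ 4g+2` respects every relation in `ℤ` modulo that
gcd, so it is exactly the order of `a`. -/

theorem nonempty_mulEquiv_multiplicative_zmod_orderOf {G : Type*} [Group G] {a : G}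
    (h : Subgroup.zpowers a = ⊤) : Nonempty (G ≃* Multiplicative (ZMod (orderOf a))) := by
  have hG : IsCyclic G := isCyclic_iff_exists_zpowers_eq_top.mpr ⟨a, h⟩
  rw [orderOf_eq_card_of_forall_mem_zpowers fun x => h ▸ Subgroup.mem_top x]
  exact ⟨(zmodCyclicMulEquiv hG).symm⟩

namespace Hyperelliptic

theorem gcd_eq_ite (g : ℕ) :
    Nat.gcd ((2 * g + 1) * (2 * g + 2)) (8 * g + 4) = if Even g then 4 * g + 2 else 8 * g + 4 := by
  rw [show (2 * g + 1) * (2 * g + 2) = (4 * g + 2) * (g + 1) by ring,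
    show 8 * g + 4 = (4 * g + 2) * 2 by ring, Nat.gcd_mul_left]
  split_ifs with hg
  · rw [Nat.coprime_two_right.mpr (Even.add_one hg), mul_one]
  · rw [Nat.gcd_eq_right (even_iff_two_dvd.mp (Nat.not_even_iff_odd.mp hg).add_one)]

section CommMonoid

variable {g : ℕ} {M : Type*} [CommMonoid M]

theorem map_hypProd (f : FreeGroup (hypGen g) →* M) {x : M} (hf : ∀ i, f (hypA g i) = x) :
    f (hypProd g) = x ^ (2 * g + 1) := by
  simp only [hypProd, map_list_prod, List.map_ofFn, Function.comp_def, hf, List.ofFn_const,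
    List.prod_replicate]

theorem map_hypProd_reverse (f : FreeGroup (hypGen g) →* M) {x : M}
    (hf : ∀ i, f (hypA g i) = x) :
    f (List.ofFn fun i : Fin (2 * g + 1) => hypA g i.castSucc).reverse.prod = x ^ (2 * g + 1) := by
  simp only [map_list_prod, List.map_reverse, List.prod_reverse, List.map_ofFn, Function.comp_def,
    hf, List.ofFn_const, List.prod_replicate]

end CommMonoid

theorem map_eq_one_of_mem_hypRels {g : ℕ} {M : Type*} [CommGroup M]
    (f : FreeGroup (hypGen g) →* M) {a : M}
    (hA : ∀ i, f (hypA g i) = a) (hB : f (hypB g) = a ^ (2 * g + 1))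
    (hρ : f (hypRho g) = a ^ (4 * g + 2)) (h₁ : a ^ ((2 * g + 1) * (2 * g + 2)) = 1)
    (h₂ : a ^ (8 * g + 4) = 1) : ∀ r ∈ hypRels g, f r = 1 := by
  rintro r (((((((rfl | rfl) | ⟨i, rfl⟩) | ⟨i, j, -, -, -, rfl⟩) | ⟨i, rfl⟩) | rfl) | rfl) |
    ⟨i, rfl⟩)
  · rw [map_mul, map_mul, map_inv, hρ, map_hypProd f hA, map_hypProd_reverse f hA, mul_assoc,
      ← pow_add, inv_mul_eq_one]
    ring_nf
  · simp [hB, map_hypProd f hA]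
  · simp [hA, hB]
  · simp [hA]
  · simp [hA]
  · simpa [hB, ← pow_mul]
  · simpa [hρ, ← pow_mul, show (4 * g + 2) * 2 = 8 * g + 4 by ring]
  · simp [hA, hρ]

theorem lift_eq_one_of_mem_hypRels {g : ℕ} {M : Type*} [CommGroup M] {a : M}
    (h₁ : a ^ ((2 * g + 1) * (2 * g + 2)) = 1) (h₂ : a ^ (8 * g + 4) = 1) :
    ∀ r ∈ hypRels g, FreeGroup.lift (Sum.elim (fun _ => a)
      (Sum.elim (fun _ => a ^ (2 * g + 1)) fun _ => a ^ (4 * g + 2))) r = 1 :=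
  map_eq_one_of_mem_hypRels _ (fun _ => FreeGroup.lift_apply_of ..) (FreeGroup.lift_apply_of ..)
    (FreeGroup.lift_apply_of ..) h₁ h₂

section Abelianization

variable (g : ℕ)

def toAb : FreeGroup (hypGen g) →* Abelianization (PresentedGroup (hypRels g)) :=
  Abelianization.of.comp (PresentedGroup.mk _)

variable {g}

theorem toAb_eq_one {r : FreeGroup (hypGen g)} (hr : r ∈ hypRels g) : toAb g r = 1 := by
  simp [toAb, PresentedGroup.one_of_mem hr]

theorem toAb_surjective : Function.Surjective (toAb g) :=
  (QuotientGroup.mk'_surjective _).comp (PresentedGroup.mk_surjective _)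

theorem toAb_hypA_add_one (i : Fin (2 * g + 2)) : toAb g (hypA g (i + 1)) = toAb g (hypA g i) := by
  have h := toAb_eq_one (r := hypB g * hypA g i * (hypB g)⁻¹ * (hypA g (i + 1))⁻¹)
    (by simp [hypRels])
  rw [map_mul, map_inv, mul_inv_eq_one, map_mul, map_mul, map_inv, mul_inv_cancel_comm] at h
  exact h.symm

open Fin.NatCast in
theorem toAb_hypA (i : Fin (2 * g + 2)) : toAb g (hypA g i) = toAb g (hypA g 0) := by
  suffices ∀ k : ℕ, toAb g (hypA g (k : Fin (2 * g + 2))) = toAb g (hypA g 0) by simpa using this i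
  intro k
  induction k with
  | zero => rfl
  | succ k ih => rw [Nat.cast_succ, toAb_hypA_add_one, ih]

theorem toAb_hypB : toAb g (hypB g) = toAb g (hypA g 0) ^ (2 * g + 1) := by
  have h := toAb_eq_one (r := (hypB g)⁻¹ * hypProd g) (by simp [hypRels])
  rwa [map_mul, map_inv, inv_mul_eq_one, map_hypProd _ toAb_hypA] at h

theorem toAb_hypRho : toAb g (hypRho g) = toAb g (hypA g 0) ^ (4 * g + 2) := by
  have h := toAb_eq_one (r := (hypRho g)⁻¹ * hypProd g *
    (List.ofFn fun i : Fin (2 * g + 1) => hypA g i.castSucc).reverse.prod) (by simp [hypRels])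
  rw [map_mul, map_mul, map_inv, map_hypProd _ toAb_hypA, map_hypProd_reverse _ toAb_hypA,
    mul_assoc, ← pow_add, inv_mul_eq_one] at h
  rw [h]
  ring_nf

theorem toAb_hypA_pow_gcd_eq_one :
    toAb g (hypA g 0) ^ Nat.gcd ((2 * g + 1) * (2 * g + 2)) (8 * g + 4) = 1 := by
  have hB := toAb_eq_one (r := hypB g ^ (2 * g + 2)) (by simp [hypRels])
  have hρ := toAb_eq_one (r := hypRho g ^ 2) (by simp [hypRels])
  rw [map_pow, toAb_hypB, ← pow_mul] at hB
  rw [map_pow, toAb_hypRho, ← pow_mul, show (4 * g + 2) * 2 = 8 * g + 4 by ring] at hρ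
  exact pow_gcd_eq_one.mpr ⟨hB, hρ⟩

theorem zpowers_toAb_hypA (i : Fin (2 * g + 2)) : Subgroup.zpowers (toAb g (hypA g i)) = ⊤ := by
  rw [toAb_hypA, Subgroup.eq_top_iff']
  intro z
  obtain ⟨w, rfl⟩ := toAb_surjective z
  induction w using FreeGroup.induction_on with
  | C1 => exact one_mem _
  | of x =>
    rcases x with i | ⟨⟨⟩⟩ | ⟨⟨⟩⟩
    · exact (toAb_hypA i).symm ▸ Subgroup.mem_zpowers _
    · exact toAb_hypB ▸ Subgroup.pow_mem _ (Subgroup.mem_zpowers _) _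
    · exact toAb_hypRho ▸ Subgroup.pow_mem _ (Subgroup.mem_zpowers _) _
  | inv_of x hx => simpa using inv_mem hx
  | mul x y hx hy => simpa using mul_mem hx hy

theorem orderOf_toAb_hypA :
    orderOf (toAb g (hypA g 0)) = Nat.gcd ((2 * g + 1) * (2 * g + 2)) (8 * g + 4) := by
  set n := Nat.gcd ((2 * g + 1) * (2 * g + 2)) (8 * g + 4)
  refine Nat.dvd_antisymm (orderOf_dvd_of_pow_eq_one toAb_hypA_pow_gcd_eq_one) ?_
  let a : Multiplicative (ZMod n) := .ofAdd 1
  have ha : orderOf a = n := by simp [a, orderOf_ofAdd_eq_addOrderOf]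
  let φ := Abelianization.lift <| PresentedGroup.toGroup <|
    lift_eq_one_of_mem_hypRels (g := g) (a := a)
    (orderOf_dvd_iff_pow_eq_one.mp (by rw [ha]; exact Nat.gcd_dvd_left ..))
    (orderOf_dvd_iff_pow_eq_one.mp (by rw [ha]; exact Nat.gcd_dvd_right ..))
  have hφ : φ (toAb g (hypA g 0)) = a :=
    (Abelianization.lift_apply_of _ _).trans (PresentedGroup.toGroup.of _)
  calc n = orderOf (φ (toAb g (hypA g 0))) := by rw [hφ, ha]
    _ ∣ orderOf (toAb g (hypA g 0)) := orderOf_map_dvd _ _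

end Abelianization

end Hyperelliptic

theorem stmt_14_general (g : ℕ) :
    Nonempty (Abelianization (PresentedGroup (hypRels g)) ≃*
        Multiplicative (ZMod (if Even g then 4 * g + 2 else 8 * g + 4))) ∧
      ∀ i : Fin (2 * g + 2),
        Subgroup.zpowers
            (Abelianization.of (PresentedGroup.of (rels := hypRels g) (Sum.inl i))) = ⊤ := by
  rw [← Hyperelliptic.gcd_eq_ite, ← Hyperelliptic.orderOf_toAb_hypA]
  exact ⟨nonempty_mulEquiv_multiplicative_zmod_orderOf (Hyperelliptic.zpowers_toAb_hypA 0),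
    Hyperelliptic.zpowers_toAb_hypA⟩

theorem stmt_14 (g : ℕ) (hg : 2 ≤ g) :
    Nonempty (Abelianization (PresentedGroup (hypRels g)) ≃*
        Multiplicative (ZMod (if Even g then 4 * g + 2 else 8 * g + 4))) ∧
      ∀ i : Fin (2 * g + 2),
        Subgroup.zpowers
            (Abelianization.of (PresentedGroup.of (rels := hypRels g) (Sum.inl i))) = ⊤ :=
  stmt_14_general g
end
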